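/- arXiv:1703.07631 — 2 statements merged into one kernel-verified Lean document; each statement's English description precedes it below -/
import Mathlib

section
/- For all integers 0 ≤ i ≤ |n|, all b ∈ Δ_i + N^r, and all a ∈ N^r with a ≠ 0, the sheaf cohomology group H^{|a| + i}(P^n, O_{P^n}(b − a)) vanishes. -/
namespace VR

/-- The dimension of the sheaf cohomology group `H^m(ℙ^N, O(u))` of a line bundle on a
single projective space `ℙ^N`: by Serre's computation, `H^0` has dimension
`choose (u + N) N` for `u ≥ 0`, `H^N` has dimension `choose (-u - 1) N` for
`u ≤ -N - 1`, and all other cohomology vanishes. -/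
def singleDim (N : ℕ) (u : ℤ) (m : ℕ) : ℕ :=
  (if m = 0 ∧ 0 ≤ u then Nat.choose (u.toNat + N) N else 0) +
  (if m = N ∧ u + N + 1 ≤ 0 then Nat.choose ((-u - 1).toNat) N else 0)

/-- The dimension of `H^m(ℙⁿ, O(u))` for the product
`ℙⁿ = ℙ^{n 0} × ⋯ × ℙ^{n (r-1)}`, computed by the Künneth formula. -/
def cohomDim (r : ℕ) (n : Fin r → ℕ) (u : Fin r → ℤ) (m : ℕ) : ℕ :=
  ∑ v ∈ Finset.Nat.antidiagonalTuple r m, ∏ i, singleDim (n i) (u i) (v i)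

/-- The set `Δ_i ⊂ ℤʳ` of twists in the `i`-th step of the minimal free resolution of
`S/B`:  `Δ_0 = {0}` and, for `i ≥ 1`,
`Δ_i = { -a : 0 ≤ a - 1 ≤ n componentwise, |a| = r + i - 1 }`. -/
def Delta (r : ℕ) (n : Fin r → ℕ) (i : ℕ) : Set (Fin r → ℤ) :=
  if i = 0 then {0}
  else {v | ∃ a : Fin r → ℤ, (∀ t, 1 ≤ a t ∧ a t ≤ (n t : ℤ) + 1) ∧
        (∑ t, a t) = (r : ℤ) + (i : ℤ) - 1 ∧ v = -a}

/-- The translated set `Δ_i + ℕ^r ⊂ ℤʳ`. -/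
def DeltaPlus (r : ℕ) (n : Fin r → ℕ) (i : ℕ) : Set (Fin r → ℤ) :=
  {v | ∃ δ ∈ Delta r n i, ∃ c : Fin r → ℕ, v = δ + fun t => (c t : ℤ)}

end VR

private lemma singleDim_ne_zero' {N : ℕ} {u : ℤ} {m : ℕ} (h : VR.singleDim N u m ≠ 0) :
    (m = 0 ∧ 0 ≤ u) ∨ (m = N ∧ u + N + 1 ≤ 0) := by
  by_contra hc
  rw [not_or] at hc
  apply h
  unfold VR.singleDim
  rw [if_neg hc.1, if_neg hc.2]

/-- For all `0 ≤ i ≤ |n|`, all `b ∈ Δ_i + ℕ^r`, and all nonzero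
`a ∈ ℕ^r`, the sheaf cohomology group `H^{|a| + i}(ℙⁿ, O(b - a))` vanishes. -/
theorem statement_7 (r : ℕ) (n : Fin r → ℕ)
    (i : ℕ) (hi : i ≤ ∑ t, n t)
    (b : Fin r → ℤ) (hb : b ∈ VR.DeltaPlus r n i)
    (a : Fin r → ℕ) (ha : a ≠ 0) :
    VR.cohomDim r n (fun t => b t - a t) ((∑ t, a t) + i) = 0 := by
  classical
  unfold VR.cohomDim
  apply Finset.sum_eq_zero
  intro v hv
  rw [Finset.Nat.mem_antidiagonalTuple] at hv
  by_contra hprod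
  replace hprod := Finset.prod_ne_zero_iff.mp hprod
  have key : ∀ t : Fin r, (v t = 0 ∧ 0 ≤ b t - a t) ∨
      (v t = n t ∧ (b t - a t) + n t + 1 ≤ 0) :=
    fun t => singleDim_ne_zero' (hprod t (Finset.mem_univ t))
  set T : Finset (Fin r) := Finset.univ.filter (fun t => (b t - a t) + n t + 1 ≤ 0) with hTdef
  have hmemT : ∀ t, t ∈ T ↔ (b t - a t) + (n t : ℤ) + 1 ≤ 0 := by
    intro t; simp [hTdef]
  have hTin : ∀ t ∈ T, v t = n t := by
    intro t ht
    rcases key t with ⟨_, h0⟩ | ⟨h1, _⟩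
    · exfalso
      have := (hmemT t).1 ht
      have : (0:ℤ) + 0 + 1 ≤ 0 := by
        have hn : (0:ℤ) ≤ (n t : ℤ) := Int.natCast_nonneg _
        linarith
      linarith
    · exact h1
  have hTout : ∀ t ∉ T, v t = 0 ∧ 0 ≤ b t - a t := by
    intro t ht
    rcases key t with h | ⟨_, h2⟩
    · exact h
    · exact absurd ((hmemT t).2 h2) ht
  -- sum of v over univ equals sum of n over T
  have hvsum : ∑ t, v t = ∑ t ∈ T, n t := by
    rw [← Finset.sum_subset (Finset.subset_univ T) (fun t _ ht => (hTout t ht).1)]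
    exact Finset.sum_congr rfl hTin
  have hsum : (∑ t, (a t : ℤ)) + i = ∑ t ∈ T, (n t : ℤ) := by
    have : ((∑ t, a t : ℕ) : ℤ) + (i : ℤ) = ((∑ t ∈ T, n t : ℕ) : ℤ) := by
      exact_mod_cast congrArg (fun x : ℕ => (x : ℤ)) (hv ▸ hvsum)
    push_cast at this ⊢
    linarith
  -- sum of a over T ≤ total sum of a
  have haT : (∑ t ∈ T, (a t : ℤ)) ≤ ∑ t, (a t : ℤ) :=
    Finset.sum_le_sum_of_subset_of_nonneg (Finset.subset_univ T)
      (fun t _ _ => Int.natCast_nonneg _)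
  obtain ⟨δ, hδ, c, hbc⟩ := hb
  rcases Nat.eq_zero_or_pos i with hi0 | hipos
  · -- i = 0 : δ = 0
    subst hi0
    have hδ0 : δ = 0 := by
      simpa [VR.Delta] using hδ
    subst hδ0
    have hbceq : ∀ t, b t = (c t : ℤ) := by
      intro t; rw [hbc]; simp
    have hlb : ∀ t ∈ T, (n t : ℤ) + 1 ≤ (a t : ℤ) := by
      intro t ht
      have := (hmemT t).1 ht
      have hc0 : (0:ℤ) ≤ c t := Int.natCast_nonneg _
      rw [hbceq t] at this
      linarith
    have h1 : ∑ t ∈ T, ((n t : ℤ) + 1) ≤ ∑ t ∈ T, (a t : ℤ) :=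
      Finset.sum_le_sum hlb
    rw [Finset.sum_add_distrib, Finset.sum_const, nsmul_eq_mul, mul_one] at h1
    have hTcard : (T.card : ℤ) ≤ 0 := by
      have := hsum
      simp only [Nat.cast_zero, add_zero] at this
      linarith
    have hT0 : T = ∅ := by
      have : T.card = 0 := by exact_mod_cast le_antisymm (by exact_mod_cast hTcard) (Nat.zero_le _)
      exact Finset.card_eq_zero.1 this
    have hasum : (∑ t, (a t : ℤ)) = 0 := by
      rw [hT0] at hsum
      simpa using hsum
    apply ha
    funext t
    have : ∀ t ∈ Finset.univ, a t = 0 := by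
      have h0 : (∑ t, a t) = 0 := by exact_mod_cast hasum
      exact fun t _ => (Finset.sum_eq_zero_iff.1 h0) t (Finset.mem_univ t)
    exact this t (Finset.mem_univ t)
  · -- i ≥ 1
    have hine : i ≠ 0 := Nat.pos_iff_ne_zero.1 hipos
    rw [VR.Delta, if_neg hine] at hδ
    obtain ⟨α, hα, hαsum, hδα⟩ := hδ
    have hbceq : ∀ t, b t = -α t + (c t : ℤ) := by
      intro t; rw [hbc, hδα]; simp
    -- lower bound on a over T
    have hlb : ∀ t ∈ T, (n t : ℤ) + 1 - α t ≤ (a t : ℤ) := by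
      intro t ht
      have := (hmemT t).1 ht
      have hc0 : (0:ℤ) ≤ c t := Int.natCast_nonneg _
      rw [hbceq t] at this
      linarith
    have h1 : ∑ t ∈ T, ((n t : ℤ) + 1 - α t) ≤ ∑ t ∈ T, (a t : ℤ) :=
      Finset.sum_le_sum hlb
    have h1' : ∑ t ∈ T, (n t : ℤ) + T.card - ∑ t ∈ T, α t ≤ ∑ t ∈ T, (a t : ℤ) := by
      have : ∑ t ∈ T, ((n t : ℤ) + 1 - α t)
          = ∑ t ∈ T, (n t : ℤ) + T.card - ∑ t ∈ T, α t := by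
        rw [Finset.sum_sub_distrib, Finset.sum_add_distrib, Finset.sum_const,
          nsmul_eq_mul, mul_one]
      linarith
    -- upper bound on ∑_T α
    have hsplit : ∑ t ∈ T, α t + ∑ t ∈ Tᶜ, α t = ∑ t, α t :=
      Finset.sum_add_sum_compl T α
    have hcompl : ((Tᶜ : Finset (Fin r)).card : ℤ) ≤ ∑ t ∈ Tᶜ, α t := by
      have : ∑ t ∈ Tᶜ, (1:ℤ) ≤ ∑ t ∈ Tᶜ, α t :=
        Finset.sum_le_sum (fun t _ => (hα t).1)
      simpa using this
    have hcards : T.card + (Tᶜ : Finset (Fin r)).card = r := by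
      simp
    have hcardsZ : (T.card : ℤ) + ((Tᶜ : Finset (Fin r)).card : ℤ) = r := by
      exact_mod_cast hcards
    have h2 : ∑ t ∈ T, α t ≤ (T.card : ℤ) + i - 1 := by
      have := hαsum
      linarith
    -- combine: from h1', haT, hsum
    have hiN : (1:ℤ) ≤ i := by exact_mod_cast hipos
    linarith
end

section
/- Let M be a finitely generated Z^r-graded S-module with minimal free resolution F, let d ∈ Z^r, let G_i be the direct sum of all free summands of F_i whose generator has degree ≤ d + n componentwise, and let φ_i be the restriction of the i-th differential of F to G_i. Then: (i) φ_i(G_i) ⊆ G_{i−1} and φ_i ∘ φ_{i+1} = 0, so G = [G_0 ← G_1 ← G_2 ← ...] is a free complex; and (ii) up to isomorphism of complexes, G depends only on M and d, not on the chosen minimal free resolution. -/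
namespace VR

open MvPolynomial

variable (r : ℕ) (n : Fin r → ℕ) (k : Type) [Field k]

/-- Index set for the variables of the Cox ring of `ℙⁿ = ℙ^{n 0} × ⋯ × ℙ^{n (r-1)}`. -/
abbrev Vars : Type := Σ i : Fin r, Fin (n i + 1)

/-- The Cox ring `S = k[x_{i,j}]`. -/
abbrev Cox : Type := MvPolynomial (Vars r n) k

/-- The multidegree of the variable `x_{i,j}` is the `i`-th standard basis vector of `ℤ^r`. -/
def wt : Vars r n → (Fin r → ℤ) := fun v => Pi.single v.1 1

/-- The degree-`d` graded piece of the Cox ring. -/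
def Sdeg (d : Fin r → ℤ) : Set (Cox r n k) :=
  (weightedHomogeneousSubmodule k (wt r n) d : Set (Cox r n k))

/-- The ideal `⟨x_{i,0}, …, x_{i,n_i}⟩` of the `i`-th block of variables. -/
noncomputable def coordIdeal (i : Fin r) : Ideal (Cox r n k) :=
  Ideal.span (Set.range fun j : Fin (n i + 1) => (X ⟨i, j⟩ : Cox r n k))

/-- The irrelevant ideal `B = ⋂ᵢ ⟨x_{i,0}, …, x_{i,n_i}⟩`. -/
noncomputable def irrel : Ideal (Cox r n k) := ⨅ i, coordIdeal r n k i

/-- The dimension `|n| = n 0 + ⋯ + n (r-1)` of `ℙⁿ`. -/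
def totalDim : ℕ := ∑ i, n i

/-- The maximal homogeneous ideal `⟨all variables⟩` of the Cox ring. -/
noncomputable def maxIdeal : Ideal (Cox r n k) :=
  Ideal.span (Set.range fun v : Vars r n => (X v : Cox r n k))

variable {N : Type} [AddCommGroup N] [Module (Cox r n k) N]

/-- An element is `B`-torsion if it is annihilated by a power of the irrelevant ideal. -/
def BTorsion (x : N) : Prop :=
  ∃ m : ℕ, ∀ s ∈ (irrel r n k) ^ m, s • x = 0

/-- A module is `B`-saturated when `H⁰_B(M) = 0`, i.e. it has no nonzero `B`-torsion. -/
def BSaturatedModule : Prop := ∀ x : N, BTorsion r n k x → x = 0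

/-- `piece` is a `ℤʳ`-grading on the `S`-module `N`. -/
structure IsGrading (piece : (Fin r → ℤ) → Set N) : Prop where
  zero_mem : ∀ d, (0 : N) ∈ piece d
  add_mem : ∀ d x y, x ∈ piece d → y ∈ piece d → x + y ∈ piece d
  neg_mem : ∀ d x, x ∈ piece d → -x ∈ piece d
  smul_mem : ∀ d e (s : Cox r n k) (x : N),
    s ∈ Sdeg r n k d → x ∈ piece e → s • x ∈ piece (d + e)
  decompose : ∀ x : N, ∃ f : (Fin r → ℤ) →₀ N,
    (∀ d, f d ∈ piece d) ∧ x = f.sum fun _ y => y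
  indep : ∀ f : (Fin r → ℤ) →₀ N,
    (∀ d, f d ∈ piece d) → (f.sum fun _ y => y) = 0 → f = 0

/-- The degree-`d` piece of the twisted free module `⊕_j S(-t j)`. -/
def fpiece {m : ℕ} (t : Fin m → (Fin r → ℤ)) (d : Fin r → ℤ) :
    Set (Fin m → Cox r n k) :=
  {x | ∀ j, x j ∈ Sdeg r n k (d - t j)}

/-- A complex `F₀ ← F₁ ← F₂ ← ⋯` of finite-rank twisted free graded `S`-modules,
with degree-preserving differentials. -/
structure FreeComplex where
  rank : ℕ → ℕ
  twist : ∀ i, Fin (rank i) → (Fin r → ℤ)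
  diff : ∀ i, ((Fin (rank (i + 1)) → Cox r n k) →ₗ[Cox r n k] (Fin (rank i) → Cox r n k))
  graded : ∀ i d x, x ∈ fpiece r n k (twist (i + 1)) d → diff i x ∈ fpiece r n k (twist i) d
  comp_zero : ∀ i, (diff i).comp (diff (i + 1)) = 0

/-- `F` has length at most `p`, i.e. `F_i = 0` for `i > p`. -/
def FreeComplex.LengthLE (F : FreeComplex r n k) (p : ℕ) : Prop :=
  ∀ i, p < i → F.rank i = 0

/-- All higher homology modules of `F` are supported on the irrelevant ideal. -/
def FreeComplex.HigherHomologyIrrelevant (F : FreeComplex r n k) : Prop :=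
  ∀ (i : ℕ) (x : Fin (F.rank (i + 1)) → Cox r n k), F.diff i x = 0 →
    ∃ m : ℕ, ∀ s ∈ (irrel r n k) ^ m, ∃ y, F.diff (i + 1) y = s • x

/-- The zeroth homology module `H₀(F) = F₀ / im(F₁ → F₀)`. -/
abbrev FreeComplex.H0 (F : FreeComplex r n k) : Type :=
  (Fin (F.rank 0) → Cox r n k) ⧸ LinearMap.range (F.diff 0)

/-- The induced grading on `H₀(F)`. -/
def FreeComplex.H0piece (F : FreeComplex r n k) (d : Fin r → ℤ) : Set F.H0 :=
  (LinearMap.range (F.diff 0)).mkQ '' (fpiece r n k (F.twist 0) d)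

/-- The truncation `N_{≥ a}`: the submodule generated by all pieces of degree `≥ a`. -/
noncomputable def trunc (piece : (Fin r → ℤ) → Set N) (a : Fin r → ℤ) : Submodule (Cox r n k) N :=
  Submodule.span (Cox r n k) (⋃ d ∈ {d : Fin r → ℤ | a ≤ d}, piece d)

/-- Two graded modules give isomorphic sheaves on `ℙⁿ`: sufficiently positive
truncations are isomorphic as graded modules. -/
def SheafEquiv {N₁ N₂ : Type} [AddCommGroup N₁] [Module (Cox r n k) N₁]
    [AddCommGroup N₂] [Module (Cox r n k) N₂]
    (P₁ : (Fin r → ℤ) → Set N₁) (P₂ : (Fin r → ℤ) → Set N₂) : Prop :=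
  ∃ a : Fin r → ℤ, ∃ e : trunc r n k P₁ a ≃ₗ[Cox r n k] trunc r n k P₂ a,
    ∀ d, a ≤ d → ∀ x : trunc r n k P₁ a, (x : N₁) ∈ P₁ d → ((e x : N₂) ∈ P₂ d)

/-- `F` is a virtual resolution of the graded module `(N, piece)`:  the associated
complex of sheaves on `ℙⁿ` is a locally free resolution of the sheaf of `N`. -/
def IsVirtualResolution (F : FreeComplex r n k) (piece : (Fin r → ℤ) → Set N) : Prop :=
  F.HigherHomologyIrrelevant ∧ SheafEquiv r n k (F.H0piece) piece


variable {N₀ : Type} [AddCommGroup N₀] [Module (Cox r n k) N₀]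

/-- `F`, together with the augmentation `ε : F₀ → N`, is a free resolution of the
graded module `(N, piece)`. -/
structure IsFreeResolution (F : FreeComplex r n k) (piece : (Fin r → ℤ) → Set N₀)
    (ε : (Fin (F.rank 0) → Cox r n k) →ₗ[Cox r n k] N₀) : Prop where
  surj : Function.Surjective ε
  gradedAug : ∀ d x, x ∈ fpiece r n k (F.twist 0) d → ε x ∈ piece d
  exact_zero : LinearMap.ker ε = LinearMap.range (F.diff 0)
  exact : ∀ i, LinearMap.ker (F.diff i) = LinearMap.range (F.diff (i + 1))

/-- A complex of free modules is minimal when all entries of its differentials lie in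
the maximal homogeneous ideal. -/
def FreeComplex.IsMinimal (F : FreeComplex r n k) : Prop :=
  ∀ i b j, F.diff i (Pi.single b 1) j ∈ maxIdeal r n k

/-- The grading of a quotient ring `S/I`, viewed as an `S`-module. -/
def qpiece (I : Ideal (Cox r n k)) (d : Fin r → ℤ) : Set (Cox r n k ⧸ I) :=
  I.mkQ '' (Sdeg r n k d)

/-- An ideal of the Cox ring is homogeneous if it is generated by its
homogeneous elements. -/
def IsHomogeneousIdeal (I : Ideal (Cox r n k)) : Prop :=
  I = Ideal.span {f | f ∈ I ∧ ∃ d, f ∈ Sdeg r n k d}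

/-- An ideal is `B`-saturated when `(I : B^∞) = I`. -/
def BSaturatedIdeal (I : Ideal (Cox r n k)) : Prop :=
  ∀ f : Cox r n k, (∃ m : ℕ, ∀ s ∈ (irrel r n k) ^ m, s * f ∈ I) → f ∈ I

/-- The height (codimension) of a prime ideal `Q`, as the height of the corresponding
point of the prime spectrum. -/
noncomputable def codim (Q : Ideal (Cox r n k)) (hQ : Q.IsPrime) : ℕ∞ :=
  Order.height (show PrimeSpectrum (Cox r n k) from ⟨Q, hQ⟩)

/-- `N` admits a regular sequence of length `t` contained in the maximal homogeneous
ideal (i.e. the depth of `N` is at least `t`). -/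
def HasDepthAtLeast (t : ℕ) : Prop :=
  ∃ rs : List (Cox r n k), rs.length = t ∧ (∀ x ∈ rs, x ∈ maxIdeal r n k) ∧
    RingTheory.Sequence.IsRegular N₀ rs

end VR
namespace VR

variable (r : ℕ) (n : Fin r → ℕ) (k : Type) [Field k]

/-- The subcomplex `G` of the free complex `F` spanned by all free summands whose
generator has degree `≤ d + n` componentwise: `G_i ⊆ F_i` consists of the vectors
supported on the coordinates with small twist. -/
noncomputable def Gsub (F : FreeComplex r n k) (d : Fin r → ℤ) (i : ℕ) :
    Submodule (Cox r n k) (Fin (F.rank i) → Cox r n k) where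
  carrier := {x | ∀ b, ¬ (F.twist i b ≤ d + fun t => (n t : ℤ)) → x b = 0}
  zero_mem' := fun _ _ => rfl
  add_mem' := by
    intro x y hx hy b hb
    simp only [Pi.add_apply, hx b hb, hy b hb, add_zero]
  smul_mem' := by
    intro c x hx b hb
    simp only [Pi.smul_apply, hx b hb, smul_zero]

end VR

/-!
Part (i) holds for every graded free complex: an entry of a degree-preserving map `S(-a) → S(-b)`
is homogeneous of degree `a - b` and vanishes unless `b ≤ a`, so summands of twist `≤ d + n`
are sent into summands of twist `≤ d + n`.

For (ii), the comparison theorem gives graded chain maps `α : F → F'` and `β : F' → F` over the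
identity of `M`. Then `βα - 1` lifts zero, hence is null-homotopic, and as `F` is minimal its
entries lie in the maximal ideal. An entry between summands of equal twist is then a constant in
the maximal ideal, i.e. zero, so `βα - 1` strictly lowers twists and is nilpotent. Hence `βα`,
and likewise `αβ`, restrict to automorphisms of `G` and `G'`, and `α` restricts to an isomorphism
of graded complexes `G ≅ G'`.
-/

open Function

theorem exists_seq_of_forall_exists_step {X : ℕ → Type*} (C : ∀ i, X i → X (i + 1) → Prop)
    {x₀ : X 0} {x₁ : X 1} (h₀ : C 0 x₀ x₁) (step : ∀ i x y, C i x y → ∃ z, C (i + 1) y z) :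
    ∃ α : ∀ i, X i, α 0 = x₀ ∧ ∀ i, C i (α i) (α (i + 1)) :=
  let pairs : ∀ i, {p : X i × X (i + 1) // C i p.1 p.2} := fun i =>
    Nat.rec ⟨(x₀, x₁), h₀⟩
      (fun i p => ⟨(p.1.2, (step i _ _ p.2).choose), (step i _ _ p.2).choose_spec⟩) i
  ⟨fun i => (pairs i).1.1, rfl, fun i => (pairs i).2⟩

theorem LinearMap.exists_comp_eq_of_range_le {R P M N : Type*} [Ring R]
    [AddCommGroup P] [Module R P] [Module.Projective R P] [AddCommGroup M] [Module R M]
    [AddCommGroup N] [Module R N] (ψ : M →ₗ[R] N) (φ : P →ₗ[R] N)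
    (h : LinearMap.range φ ≤ LinearMap.range ψ) : ∃ l : P →ₗ[R] M, ψ ∘ₗ l = φ := by
  obtain ⟨l, hl⟩ := Module.projective_lifting_property ψ.rangeRestrict
    (φ.codRestrict _ fun x => h ⟨x, rfl⟩) ψ.surjective_rangeRestrict
  exact ⟨l, LinearMap.ext fun x => congrArg Subtype.val (LinearMap.congr_fun hl x)⟩

theorem Module.End.bijective_restrict_of_isNilpotent_sub_one {R M : Type*} [Ring R]
    [AddCommGroup M] [Module R M] {f : Module.End R M} (hf : IsNilpotent (f - 1))
    {p : Submodule R M} (hp : ∀ x ∈ p, f x ∈ p) : Bijective (f.restrict hp) := by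
  have hp' : ∀ x ∈ p, (f - 1) x ∈ p := fun x hx => p.sub_mem (hp x hx) hx
  have : f.restrict hp = 1 + (f - 1).restrict hp' := by ext; simp
  rw [← Module.End.isUnit_iff, this]
  exact (Module.End.isNilpotent.restrict hp' hf).isUnit_one_add

theorem LinearMap.bijective_restrict_of_comp {R M M' : Type*} [Semiring R]
    [AddCommMonoid M] [Module R M] [AddCommMonoid M'] [Module R M']
    {α : M →ₗ[R] M'} {β : M' →ₗ[R] M} {p : Submodule R M} {p' : Submodule R M'}
    (hα : ∀ x ∈ p, α x ∈ p') (hβ : ∀ x ∈ p', β x ∈ p)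
    (h₁ : Injective ((β ∘ₗ α).restrict fun x hx => hβ _ (hα x hx)))
    (h₂ : Surjective ((α ∘ₗ β).restrict fun x hx => hα _ (hβ x hx))) :
    Bijective (α.restrict hα) :=
  ⟨Injective.of_comp (f := β.restrict hβ) h₁, Surjective.of_comp (g := β.restrict hβ) h₂⟩

section FreeModule

variable {R : Type*} [CommSemiring R] {ι κ : Type*} [Fintype ι] [DecidableEq ι]

theorem LinearMap.pi_apply_eq_sum_mul (f : (ι → R) →ₗ[R] (κ → R)) (x : ι → R) (j : κ) :
    f x j = ∑ b, x b * f (Pi.single b 1) j := by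
  conv_lhs => rw [pi_eq_sum_univ' x, map_sum]
  simp [Finset.sum_apply]

theorem LinearMap.apply_mem_of_forall_single_mem {I : Ideal R} {f : (ι → R) →ₗ[R] (κ → R)}
    (hf : ∀ b j, f (Pi.single b 1) j ∈ I) (x : ι → R) (j : κ) : f x j ∈ I := by
  rw [f.pi_apply_eq_sum_mul]
  exact Ideal.sum_mem _ fun b _ => I.mul_mem_left _ (hf b j)

theorem LinearMap.apply_mem_of_forall_mem {I : Ideal R} (f : (ι → R) →ₗ[R] (κ → R))
    {x : ι → R} (hx : ∀ b, x b ∈ I) (j : κ) : f x j ∈ I := by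
  rw [f.pi_apply_eq_sum_mul]
  exact Ideal.sum_mem _ fun b _ => I.mul_mem_right _ (hx b)

theorem Module.End.isNilpotent_of_apply_single_ne_zero {α : Type*} [Preorder α] (t : ι → α)
    {A : Module.End R (ι → R)} (hA : ∀ b j, A (Pi.single b 1) j ≠ 0 → t j < t b) :
    IsNilpotent A := by
  classical
  let height : ι → ℕ := fun j => (Finset.univ.filter fun b => t b < t j).card
  have height_lt {j j' : ι} (h : t j < t j') : height j < height j' :=
    Finset.card_lt_card <| Finset.ssubset_iff_of_subset
      (fun b hb => by simp only [Finset.mem_filter] at hb ⊢; exact ⟨hb.1, hb.2.trans h⟩) |>.2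
      ⟨j, by simp [h], by simp⟩
  have height_lt_card (j : ι) : height j < Fintype.card ι :=
    Finset.card_lt_card (Finset.filter_ssubset.2 ⟨j, Finset.mem_univ _, lt_irrefl _⟩)
  have vanish : ∀ s x j, Fintype.card ι ≤ height j + s → (A ^ s) x j = 0 := by
    intro s
    induction s with
    | zero => intro x j h; exact absurd h (by simpa using height_lt_card j)
    | succ s ih =>
      intro x j h
      rw [pow_succ', Module.End.mul_apply, LinearMap.pi_apply_eq_sum_mul]
      refine Finset.sum_eq_zero fun b _ => ?_
      by_cases hb : A (Pi.single b 1) j = 0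
      · rw [hb, mul_zero]
      · rw [ih x b (by have := height_lt (hA b j hb); omega), zero_mul]
  exact ⟨Fintype.card ι, LinearMap.ext fun x => funext fun j => vanish _ x j (by omega)⟩

end FreeModule

namespace VR

open MvPolynomial

variable {r : ℕ} {n : Fin r → ℕ} {k : Type} [Field k]

theorem mem_Sdeg {p : Cox r n k} {w : Fin r → ℤ} :
    p ∈ Sdeg r n k w ↔ p.IsWeightedHomogeneous (wt r n) w := Iff.rfl

theorem le_weight_wt_apply (μ : Vars r n →₀ ℕ) (v : Vars r n) :
    (μ v : ℤ) ≤ Finsupp.weight (wt r n) μ v.1 := by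
  classical
  have hterm (u : Vars r n) : 0 ≤ (μ u • wt r n u) v.1 := by
    simp only [wt, Pi.smul_apply, Pi.single_apply]
    split_ifs <;> positivity
  rw [Finsupp.weight_apply, Finsupp.sum, Finset.sum_apply]
  by_cases hv : v ∈ μ.support
  · calc (μ v : ℤ) = (μ v • wt r n v) v.1 := by simp [wt]
      _ ≤ _ := Finset.single_le_sum (fun u _ => hterm u) hv
  · rw [Finsupp.notMem_support_iff.1 hv, Nat.cast_zero]
    exact Finset.sum_nonneg fun u _ => hterm u

theorem weight_wt_nonneg (μ : Vars r n →₀ ℕ) : 0 ≤ Finsupp.weight (wt r n) μ :=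
  fun i => (Nat.cast_nonneg _).trans (le_weight_wt_apply μ ⟨i, 0⟩)

theorem nonneg_of_mem_Sdeg {p : Cox r n k} {w : Fin r → ℤ} (h : p ∈ Sdeg r n k w) (hp : p ≠ 0) :
    0 ≤ w := by
  obtain ⟨μ, hμ⟩ := MvPolynomial.ne_zero_iff.1 hp
  exact h hμ ▸ weight_wt_nonneg μ

theorem eq_zero_of_mem_Sdeg_zero_of_mem_maxIdeal {p : Cox r n k} (h0 : p ∈ Sdeg r n k 0)
    (hm : p ∈ maxIdeal r n k) : p = 0 := by
  have hcoeff : constantCoeff p = 0 := by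
    refine (Ideal.span_le (I := RingHom.ker constantCoeff)).2 ?_ hm
    rintro _ ⟨v, rfl⟩
    simp
  ext μ
  by_contra hμ
  have hμ0 : μ = 0 := by
    ext v
    have := le_weight_wt_apply μ v
    rw [h0 hμ] at this
    simp only [Pi.zero_apply, Nat.cast_nonpos] at this
    simpa using this
  subst hμ0
  exact hμ (by simpa [constantCoeff_eq] using hcoeff)

section GradedFree

variable {m m' : ℕ} {t : Fin m → (Fin r → ℤ)} {t' : Fin m' → (Fin r → ℤ)}

theorem single_one_mem_fpiece (t : Fin m → (Fin r → ℤ)) (b : Fin m) :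
    (Pi.single b 1 : Fin m → Cox r n k) ∈ fpiece r n k t (t b) := by
  intro j
  rcases eq_or_ne j b with rfl | h
  · simpa [mem_Sdeg] using isWeightedHomogeneous_one k (wt r n)
  · rw [Pi.single_eq_of_ne h]
    exact (weightedHomogeneousSubmodule k (wt r n) (t b - t j)).zero_mem

theorem smul_mem_fpiece {s : Cox r n k} {u w : Fin r → ℤ} {x : Fin m → Cox r n k}
    (hs : s ∈ Sdeg r n k u) (hx : x ∈ fpiece r n k t w) : s • x ∈ fpiece r n k t (u + w) :=
  fun j => by simpa [mem_Sdeg, add_sub_assoc] using hs.mul (hx j)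

def GradedMap (t : Fin m → (Fin r → ℤ)) (t' : Fin m' → (Fin r → ℤ))
    (g : (Fin m → Cox r n k) →ₗ[Cox r n k] (Fin m' → Cox r n k)) : Prop :=
  ∀ w x, x ∈ fpiece r n k t w → g x ∈ fpiece r n k t' w

theorem GradedMap.comp {m'' : ℕ} {t'' : Fin m'' → (Fin r → ℤ)}
    {g : (Fin m → Cox r n k) →ₗ[Cox r n k] (Fin m' → Cox r n k)}
    {g' : (Fin m' → Cox r n k) →ₗ[Cox r n k] (Fin m'' → Cox r n k)}
    (hg' : GradedMap t' t'' g') (hg : GradedMap t t' g) : GradedMap t t'' (g' ∘ₗ g) :=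
  fun w x hx => hg' w _ (hg w x hx)

theorem GradedMap.sub_one {g : Module.End (Cox r n k) (Fin m → Cox r n k)}
    (hg : GradedMap t t g) : GradedMap t t (g - 1) := by
  intro w x hx j
  exact Submodule.sub_mem (weightedHomogeneousSubmodule k (wt r n) (w - t j)) (hg w x hx j) (hx j)

theorem GradedMap.apply_single_mem {g : (Fin m → Cox r n k) →ₗ[Cox r n k] (Fin m' → Cox r n k)}
    (hg : GradedMap t t' g) (b : Fin m) (j : Fin m') :
    g (Pi.single b 1) j ∈ Sdeg r n k (t b - t' j) :=
  hg (t b) _ (single_one_mem_fpiece t b) j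

theorem GradedMap.le_of_apply_single_ne_zero
    {g : (Fin m → Cox r n k) →ₗ[Cox r n k] (Fin m' → Cox r n k)} (hg : GradedMap t t' g)
    {b : Fin m} {j : Fin m'} (h : g (Pi.single b 1) j ≠ 0) : t' j ≤ t b :=
  sub_nonneg.1 (nonneg_of_mem_Sdeg (hg.apply_single_mem b j) h)

theorem GradedMap.lt_of_apply_single_ne_zero
    {g : (Fin m → Cox r n k) →ₗ[Cox r n k] (Fin m' → Cox r n k)} (hg : GradedMap t t' g)
    (hmax : ∀ x j, g x j ∈ maxIdeal r n k) {b : Fin m} {j : Fin m'}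
    (h : g (Pi.single b 1) j ≠ 0) : t' j < t b := by
  refine (hg.le_of_apply_single_ne_zero h).lt_of_ne fun heq => h ?_
  refine eq_zero_of_mem_Sdeg_zero_of_mem_maxIdeal ?_ (hmax _ j)
  simpa [heq] using hg.apply_single_mem b j

def twistLE (t : Fin m → (Fin r → ℤ)) (c : Fin r → ℤ) :
    Submodule (Cox r n k) (Fin m → Cox r n k) where
  carrier := {x | ∀ b, ¬ t b ≤ c → x b = 0}
  zero_mem' _ _ := rfl
  add_mem' hx hy b hb := by simp [hx b hb, hy b hb]
  smul_mem' s x hx b hb := by simp [hx b hb]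

theorem GradedMap.mapsTo_twistLE
    {g : (Fin m → Cox r n k) →ₗ[Cox r n k] (Fin m' → Cox r n k)} (hg : GradedMap t t' g)
    (c : Fin r → ℤ) : ∀ x ∈ twistLE t c, g x ∈ twistLE t' c := by
  intro x hx j hj
  rw [g.pi_apply_eq_sum_mul]
  refine Finset.sum_eq_zero fun b _ => ?_
  by_cases hb : t b ≤ c
  · by_cases hgb : g (Pi.single b 1) j = 0
    · rw [hgb, mul_zero]
    · exact absurd ((hg.le_of_apply_single_ne_zero hgb).trans hb) hj
  · rw [hx b hb, zero_mul]

end GradedFree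

section Components

variable {m m' : ℕ} {t : Fin m → (Fin r → ℤ)} {t' : Fin m' → (Fin r → ℤ)}

noncomputable def fcomponent (t : Fin m → (Fin r → ℤ)) (w : Fin r → ℤ) :
    (Fin m → Cox r n k) →ₗ[k] (Fin m → Cox r n k) :=
  LinearMap.pi fun j => weightedHomogeneousComponent (wt r n) (w - t j) ∘ₗ LinearMap.proj j

theorem fcomponent_apply (w : Fin r → ℤ) (z : Fin m → Cox r n k) (j : Fin m) :
    fcomponent t w z j = weightedHomogeneousComponent (wt r n) (w - t j) (z j) := rfl

theorem fcomponent_mem (w : Fin r → ℤ) (z : Fin m → Cox r n k) :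
    fcomponent t w z ∈ fpiece r n k t w :=
  fun _ => weightedHomogeneousComponent_isWeightedHomogeneous _ _

theorem fcomponent_of_mem {w : Fin r → ℤ} {z : Fin m → Cox r n k} (hz : z ∈ fpiece r n k t w) :
    fcomponent t w z = z :=
  funext fun j => (hz j).weightedHomogeneousComponent_same

theorem fcomponent_of_mem_of_ne {v w : Fin r → ℤ} {z : Fin m → Cox r n k}
    (hz : z ∈ fpiece r n k t v) (hvw : w ≠ v) : fcomponent t w z = 0 :=
  funext fun j => (hz j).weightedHomogeneousComponent_ne _ fun h => hvw (sub_left_inj.1 h)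

noncomputable def degSupport (t : Fin m → (Fin r → ℤ)) (z : Fin m → Cox r n k) :
    Finset (Fin r → ℤ) :=
  Finset.univ.biUnion fun j => (z j).support.image fun μ => Finsupp.weight (wt r n) μ + t j

theorem fcomponent_eq_zero_of_notMem {w : Fin r → ℤ} {z : Fin m → Cox r n k}
    (hw : w ∉ degSupport t z) : fcomponent t w z = 0 := by
  funext j
  refine weightedHomogeneousComponent_eq_zero' _ _ fun μ hμ hμw => hw ?_
  exact Finset.mem_biUnion.2 ⟨j, Finset.mem_univ j, Finset.mem_image.2 ⟨μ, hμ, by simp [hμw]⟩⟩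

theorem sum_fcomponent (t : Fin m → (Fin r → ℤ)) (z : Fin m → Cox r n k) :
    ∑ w ∈ degSupport t z, fcomponent t w z = z := by
  classical
  funext j
  ext μ
  simp only [Finset.sum_apply, fcomponent_apply, coeff_sum, coeff_weightedHomogeneousComponent,
    eq_sub_iff_add_eq]
  rw [Finset.sum_ite_eq]
  split_ifs with h
  · rfl
  · by_contra hμ
    exact h (Finset.mem_biUnion.2 ⟨j, Finset.mem_univ j,
      Finset.mem_image.2 ⟨μ, mem_support_iff.2 (Ne.symm hμ), rfl⟩⟩)

theorem GradedMap.fcomponent_map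
    {g : (Fin m → Cox r n k) →ₗ[Cox r n k] (Fin m' → Cox r n k)} (hg : GradedMap t t' g)
    (w : Fin r → ℤ) (z : Fin m → Cox r n k) : fcomponent t' w (g z) = g (fcomponent t w z) := by
  classical
  conv_lhs => rw [← sum_fcomponent t z, map_sum, map_sum]
  rw [Finset.sum_eq_single w]
  · exact fcomponent_of_mem (hg w _ (fcomponent_mem w z))
  · intro v _ hv
    exact fcomponent_of_mem_of_ne (hg v _ (fcomponent_mem v z)) (Ne.symm hv)
  · intro hw
    rw [fcomponent_eq_zero_of_notMem hw, map_zero, map_zero]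

theorem GradedMap.exists_mem_fpiece_of_mem_range
    {g : (Fin m → Cox r n k) →ₗ[Cox r n k] (Fin m' → Cox r n k)} (hg : GradedMap t t' g)
    {w : Fin r → ℤ} {x : Fin m' → Cox r n k} (hx : x ∈ fpiece r n k t' w)
    (hrange : x ∈ LinearMap.range g) : ∃ y ∈ fpiece r n k t w, g y = x := by
  obtain ⟨z, rfl⟩ := hrange
  exact ⟨fcomponent t w z, fcomponent_mem w z, by rw [← hg.fcomponent_map, fcomponent_of_mem hx]⟩

end Components

section GradedModule

variable {N : Type} [AddCommGroup N] [Module (Cox r n k) N] {piece : (Fin r → ℤ) → Set N}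

theorem IsGrading.eq_of_sum_eq (hgr : IsGrading r n k piece) {f g : (Fin r → ℤ) →₀ N}
    (hf : ∀ d, f d ∈ piece d) (hg : ∀ d, g d ∈ piece d)
    (h : (f.sum fun _ y => y) = g.sum fun _ y => y) : f = g := by
  refine sub_eq_zero.1 (hgr.indep _ (fun d => ?_) ?_)
  · rw [Finsupp.sub_apply, sub_eq_add_neg]
    exact hgr.add_mem d _ _ (hf d) (hgr.neg_mem d _ (hg d))
  · rw [Finsupp.sum_sub_index fun _ _ _ => rfl, h, sub_self]

theorem IsGrading.exists_mem_fpiece_of_mem_range (hgr : IsGrading r n k piece) {m : ℕ}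
    {t : Fin m → (Fin r → ℤ)} {ε : (Fin m → Cox r n k) →ₗ[Cox r n k] N}
    (hε : ∀ w x, x ∈ fpiece r n k t w → ε x ∈ piece w) {w : Fin r → ℤ} {c : N}
    (hc : c ∈ piece w) (hrange : c ∈ LinearMap.range ε) : ∃ y ∈ fpiece r n k t w, ε y = c := by
  classical
  obtain ⟨z, rfl⟩ := hrange
  let parts : (Fin r → ℤ) →₀ N := Finsupp.onFinset (degSupport t z)
    (fun v => ε (fcomponent t v z)) fun v hv => by
      by_contra hnot
      rw [fcomponent_eq_zero_of_notMem hnot, map_zero] at hv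
      exact hv rfl
  have hparts : parts = Finsupp.single w (ε z) := by
    refine hgr.eq_of_sum_eq (fun v => hε v _ (fcomponent_mem v z)) (fun v => ?_) ?_
    · rcases eq_or_ne w v with rfl | hv
      · simpa using hc
      · rw [Finsupp.single_apply, if_neg hv]
        exact hgr.zero_mem v
    · rw [Finsupp.onFinset_sum _ fun _ => rfl, ← map_sum, sum_fcomponent,
        Finsupp.sum_single_index rfl]
  exact ⟨fcomponent t w z, fcomponent_mem w z, by simpa [parts] using DFunLike.congr_fun hparts w⟩

end GradedModule

theorem exists_gradedMap_comp_eq {m m' : ℕ} {t : Fin m → (Fin r → ℤ)}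
    {t' : Fin m' → (Fin r → ℤ)} {M : Type} [AddCommGroup M] [Module (Cox r n k) M]
    (ψ : (Fin m' → Cox r n k) →ₗ[Cox r n k] M) (φ : (Fin m → Cox r n k) →ₗ[Cox r n k] M)
    (hpre : ∀ b, ∃ y ∈ fpiece r n k t' (t b), ψ y = φ (Pi.single b 1)) :
    ∃ l, GradedMap t t' l ∧ ψ ∘ₗ l = φ := by
  choose y hy hψy using hpre
  refine ⟨Fintype.linearCombination (Cox r n k) y, fun w x hx j => ?_, ?_⟩
  · rw [Fintype.linearCombination_apply, Finset.sum_apply]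
    refine Submodule.sum_mem (weightedHomogeneousSubmodule k (wt r n) (w - t' j)) fun b _ => ?_
    simpa [mem_Sdeg] using smul_mem_fpiece (hx b) (hy b) j
  · ext b
    simp [hψy]

theorem FreeComplex.gradedMap_diff (F : FreeComplex r n k) (i : ℕ) :
    GradedMap (F.twist (i + 1)) (F.twist i) (F.diff i) :=
  F.graded i

theorem FreeComplex.diff_diff_apply (F : FreeComplex r n k) (i : ℕ)
    (x : Fin (F.rank (i + 2)) → Cox r n k) : F.diff i (F.diff (i + 1) x) = 0 :=
  LinearMap.congr_fun (F.comp_zero i) x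

section ChainMaps

variable {N : Type} [AddCommGroup N] [Module (Cox r n k) N] {piece : (Fin r → ℤ) → Set N}
  {F F' F'' : FreeComplex r n k} {ε : (Fin (F.rank 0) → Cox r n k) →ₗ[Cox r n k] N}
  {ε' : (Fin (F'.rank 0) → Cox r n k) →ₗ[Cox r n k] N}

structure IsGradedChainMap (F F' : FreeComplex r n k)
    (ε : (Fin (F.rank 0) → Cox r n k) →ₗ[Cox r n k] N)
    (ε' : (Fin (F'.rank 0) → Cox r n k) →ₗ[Cox r n k] N)
    (α : ∀ i, (Fin (F.rank i) → Cox r n k) →ₗ[Cox r n k] (Fin (F'.rank i) → Cox r n k)) :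
    Prop where
  graded : ∀ i, GradedMap (F.twist i) (F'.twist i) (α i)
  aug : ε' ∘ₗ α 0 = ε
  comm : ∀ i, F'.diff i ∘ₗ α (i + 1) = α i ∘ₗ F.diff i

theorem IsGradedChainMap.comp {ε'' : (Fin (F''.rank 0) → Cox r n k) →ₗ[Cox r n k] N}
    {α : ∀ i, (Fin (F.rank i) → Cox r n k) →ₗ[Cox r n k] (Fin (F'.rank i) → Cox r n k)}
    {β : ∀ i, (Fin (F'.rank i) → Cox r n k) →ₗ[Cox r n k] (Fin (F''.rank i) → Cox r n k)}
    (hβ : IsGradedChainMap F' F'' ε' ε'' β) (hα : IsGradedChainMap F F' ε ε' α) :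
    IsGradedChainMap F F'' ε ε'' fun i => β i ∘ₗ α i where
  graded i := (hβ.graded i).comp (hα.graded i)
  aug := by rw [← LinearMap.comp_assoc, hβ.aug, hα.aug]
  comm i := by
    rw [← LinearMap.comp_assoc, hβ.comm, LinearMap.comp_assoc, hα.comm, LinearMap.comp_assoc]

theorem exists_gradedMap_lift_diff (F F' : FreeComplex r n k) {i : ℕ}
    {g : (Fin (F.rank i) → Cox r n k) →ₗ[Cox r n k] (Fin (F'.rank i) → Cox r n k)}
    (hg : GradedMap (F.twist i) (F'.twist i) g)
    (hrange : LinearMap.range (g ∘ₗ F.diff i) ≤ LinearMap.range (F'.diff i)) :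
    ∃ g', GradedMap (F.twist (i + 1)) (F'.twist (i + 1)) g' ∧
      F'.diff i ∘ₗ g' = g ∘ₗ F.diff i :=
  exists_gradedMap_comp_eq _ _ fun b => (F'.gradedMap_diff i).exists_mem_fpiece_of_mem_range
    (hg.comp (F.gradedMap_diff i) _ _ (single_one_mem_fpiece _ b)) (hrange ⟨_, rfl⟩)

theorem IsFreeResolution.exists_isGradedChainMap (hgr : IsGrading r n k piece)
    (hF : IsFreeResolution r n k F piece ε) (hF' : IsFreeResolution r n k F' piece ε') :
    ∃ α, IsGradedChainMap F F' ε ε' α := by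
  obtain ⟨α₀, hα₀, hα₀ε⟩ := exists_gradedMap_comp_eq (t' := F'.twist 0) ε' ε fun b =>
    hgr.exists_mem_fpiece_of_mem_range hF'.gradedAug
      (hF.gradedAug _ _ (single_one_mem_fpiece _ b)) (hF'.surj _)
  obtain ⟨α₁, hα₁, hα₁d⟩ := exists_gradedMap_lift_diff F F' hα₀ <| by
    rw [← hF'.exact_zero]
    rintro _ ⟨x, rfl⟩
    rw [LinearMap.mem_ker, ← LinearMap.comp_apply, ← LinearMap.comp_assoc, hα₀ε]
    exact hF.exact_zero.ge ⟨x, rfl⟩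
  obtain ⟨α, hα0, hα⟩ := exists_seq_of_forall_exists_step
    (X := fun i => (Fin (F.rank i) → Cox r n k) →ₗ[Cox r n k] (Fin (F'.rank i) → Cox r n k))
    (fun i g g' => GradedMap (F.twist i) (F'.twist i) g ∧
      GradedMap (F.twist (i + 1)) (F'.twist (i + 1)) g' ∧ F'.diff i ∘ₗ g' = g ∘ₗ F.diff i)
    ⟨hα₀, hα₁, hα₁d⟩ fun i g g' ⟨_, hg', hgg'⟩ => by
      obtain ⟨g'', hg'', hg'g''⟩ := exists_gradedMap_lift_diff F F' hg' <| by
        rw [← hF'.exact i]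
        rintro _ ⟨x, rfl⟩
        rw [LinearMap.mem_ker, ← LinearMap.comp_apply, ← LinearMap.comp_assoc, hgg']
        simp [F.diff_diff_apply]
      exact ⟨g'', hg', hg'', hg'g''⟩
  exact ⟨α, fun i => (hα i).1, hα0 ▸ hα₀ε, fun i => (hα i).2.2⟩

end ChainMaps

section Minimal

variable {N : Type} [AddCommGroup N] [Module (Cox r n k) N] {piece : (Fin r → ℤ) → Set N}
  {F : FreeComplex r n k} {ε : (Fin (F.rank 0) → Cox r n k) →ₗ[Cox r n k] N}

theorem FreeComplex.IsMinimal.apply_mem (hmin : F.IsMinimal r n k) (i : ℕ)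
    (x : Fin (F.rank (i + 1)) → Cox r n k) (j : Fin (F.rank i)) :
    F.diff i x j ∈ maxIdeal r n k :=
  LinearMap.apply_mem_of_forall_single_mem (hmin i) x j

theorem IsFreeResolution.apply_mem_of_aug_comp_eq_zero (hF : IsFreeResolution r n k F piece ε)
    {I : Ideal (Cox r n k)} (hI : ∀ i x j, F.diff i x j ∈ I)
    {θ : ∀ i, Module.End (Cox r n k) (Fin (F.rank i) → Cox r n k)}
    (hθ : ∀ i, F.diff i ∘ₗ θ (i + 1) = θ i ∘ₗ F.diff i) (hθ₀ : ε ∘ₗ θ 0 = 0) (i : ℕ)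
    (x : Fin (F.rank i) → Cox r n k) (j : Fin (F.rank i)) : θ i x j ∈ I := by
  -- `c` plays the part of `h_{i-1} ∘ d_{i-1}`, the other half of the homotopy `θ = d h + h d`.
  have homotopy : ∀ i, ∃ (h : (Fin (F.rank i) → Cox r n k) →ₗ[Cox r n k]
      (Fin (F.rank (i + 1)) → Cox r n k)) (c : Module.End (Cox r n k) (Fin (F.rank i) → Cox r n k)),
      θ i = F.diff i ∘ₗ h + c ∧ c ∘ₗ F.diff i = 0 ∧ ∀ x j, c x j ∈ I := by
    intro i
    induction i with
    | zero =>
      obtain ⟨h, hh⟩ := (F.diff 0).exists_comp_eq_of_range_le (θ 0) <| by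
        rw [← hF.exact_zero]
        rintro _ ⟨x, rfl⟩
        exact LinearMap.congr_fun hθ₀ x
      exact ⟨h, 0, by rw [hh, add_zero], LinearMap.zero_comp _, fun _ _ => I.zero_mem⟩
    | succ i ih =>
      obtain ⟨h, c, hθh, hc, -⟩ := ih
      obtain ⟨h', hh'⟩ :=
        (F.diff (i + 1)).exists_comp_eq_of_range_le (θ (i + 1) - h ∘ₗ F.diff i) <| by
          rw [← hF.exact i]
          rintro _ ⟨x, rfl⟩
          have hθx := LinearMap.congr_fun (hθ i) x
          rw [hθh] at hθx
          have hcx := LinearMap.congr_fun hc x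
          simp only [LinearMap.comp_apply, LinearMap.add_apply, LinearMap.zero_apply] at hθx hcx
          simp [hθx, hcx]
      refine ⟨h', h ∘ₗ F.diff i, by rw [hh', sub_add_cancel], ?_,
        fun x j => h.apply_mem_of_forall_mem (hI i x) j⟩
      rw [LinearMap.comp_assoc, F.comp_zero, LinearMap.comp_zero]
  obtain ⟨h, c, hθh, -, hc⟩ := homotopy i
  rw [hθh, LinearMap.add_apply, Pi.add_apply]
  exact I.add_mem (hI i _ j) (hc x j)

theorem IsGradedChainMap.bijective_restrict_twistLE (hF : IsFreeResolution r n k F piece ε)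
    (hmin : F.IsMinimal r n k)
    {γ : ∀ i, Module.End (Cox r n k) (Fin (F.rank i) → Cox r n k)}
    (hγ : IsGradedChainMap F F ε ε γ) (i : ℕ) (c : Fin r → ℤ) :
    Function.Bijective ((γ i).restrict ((hγ.graded i).mapsTo_twistLE c)) := by
  have hmax : ∀ i x j, (γ i - 1) x j ∈ maxIdeal r n k :=
    hF.apply_mem_of_aug_comp_eq_zero hmin.apply_mem
      (fun i => by rw [LinearMap.comp_sub, LinearMap.sub_comp, hγ.comm]; rfl)
      (by rw [LinearMap.comp_sub, hγ.aug]; exact sub_self ε)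
  refine Module.End.bijective_restrict_of_isNilpotent_sub_one ?_ _
  exact Module.End.isNilpotent_of_apply_single_ne_zero (F.twist i) fun _ _ h =>
    (hγ.graded i).sub_one.lt_of_apply_single_ne_zero (hmax i) h

end Minimal

end VR

theorem statement_9_general (r : ℕ) (n : Fin r → ℕ) (k : Type) [Field k]
    (N : Type) [AddCommGroup N] [Module (VR.Cox r n k) N]
    (piece : (Fin r → ℤ) → Set N)
    (hgr : VR.IsGrading r n k piece)
    (d : Fin r → ℤ) :
    -- (i): the differentials restrict to the subcomplex
    (∀ (F : VR.FreeComplex r n k)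
        (ε : (Fin (F.rank 0) → VR.Cox r n k) →ₗ[VR.Cox r n k] N),
        VR.IsFreeResolution r n k F piece ε → VR.FreeComplex.IsMinimal r n k F →
        ∀ (i : ℕ) (x : Fin (F.rank (i + 1)) → VR.Cox r n k),
          x ∈ VR.Gsub r n k F d (i + 1) → F.diff i x ∈ VR.Gsub r n k F d i) ∧
    -- (ii): `G` is independent of the chosen minimal free resolution
    (∀ (F F' : VR.FreeComplex r n k)
        (ε : (Fin (F.rank 0) → VR.Cox r n k) →ₗ[VR.Cox r n k] N)
        (ε' : (Fin (F'.rank 0) → VR.Cox r n k) →ₗ[VR.Cox r n k] N),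
        VR.IsFreeResolution r n k F piece ε → VR.FreeComplex.IsMinimal r n k F →
        VR.IsFreeResolution r n k F' piece ε' → VR.FreeComplex.IsMinimal r n k F' →
        ∃ e : ∀ i : ℕ, VR.Gsub r n k F d i ≃ₗ[VR.Cox r n k] VR.Gsub r n k F' d i,
          (∀ (i : ℕ) (x : VR.Gsub r n k F d (i + 1))
              (hx' : F.diff i x.1 ∈ VR.Gsub r n k F d i),
              ((e i) ⟨F.diff i x.1, hx'⟩ : Fin (F'.rank i) → VR.Cox r n k)
                = F'.diff i ((e (i + 1)) x).1) ∧
          (∀ (i : ℕ) (dd : Fin r → ℤ) (x : VR.Gsub r n k F d i),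
              (x : Fin (F.rank i) → VR.Cox r n k) ∈ VR.fpiece r n k (F.twist i) dd →
              ((e i x : Fin (F'.rank i) → VR.Cox r n k) ∈ VR.fpiece r n k (F'.twist i) dd))) := by
  refine ⟨fun F _ _ _ i x hx => (F.gradedMap_diff i).mapsTo_twistLE _ x hx, ?_⟩
  intro F F' ε ε' hF hminF hF' hminF'
  obtain ⟨α, hα⟩ := hF.exists_isGradedChainMap hgr hF'
  obtain ⟨β, hβ⟩ := hF'.exists_isGradedChainMap hgr hF
  have hbij (i : ℕ) := LinearMap.bijective_restrict_of_comp
    ((hα.graded i).mapsTo_twistLE (d + fun t => (n t : ℤ)))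
    ((hβ.graded i).mapsTo_twistLE _)
    ((hβ.comp hα).bijective_restrict_twistLE hF hminF i _).1
    ((hα.comp hβ).bijective_restrict_twistLE hF' hminF' i _).2
  exact ⟨fun i => LinearEquiv.ofBijective _ (hbij i),
    fun i x _ => (LinearMap.congr_fun (hα.comm i) x).symm,
    fun i dd x hx => hα.graded i dd x hx⟩

/-- Let `M` be a finitely generated `ℤʳ`-graded module over the Cox
ring with minimal free resolution `F`, let `d ∈ ℤʳ`, let `G_i ⊆ F_i` be the span of
the free summands with generator degree `≤ d + n`, and let `φᵢ` be the restriction of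
the differential of `F`.  Then (i) `φᵢ(Gᵢ) ⊆ G_{i-1}` (and `φᵢ ∘ φᵢ₊₁ = 0`), so `G` is
a free complex; and (ii) up to isomorphism of (graded) complexes, `G` depends only on
`M` and `d`, not on the chosen minimal free resolution. -/
theorem statement_9 (r : ℕ) (n : Fin r → ℕ) (k : Type) [Field k]
    (N : Type) [AddCommGroup N] [Module (VR.Cox r n k) N]
    (piece : (Fin r → ℤ) → Set N)
    (hgr : VR.IsGrading r n k piece)
    (hfg : Module.Finite (VR.Cox r n k) N)
    (d : Fin r → ℤ) :
    -- (i): the differentials restrict to the subcomplex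
    (∀ (F : VR.FreeComplex r n k)
        (ε : (Fin (F.rank 0) → VR.Cox r n k) →ₗ[VR.Cox r n k] N),
        VR.IsFreeResolution r n k F piece ε → VR.FreeComplex.IsMinimal r n k F →
        ∀ (i : ℕ) (x : Fin (F.rank (i + 1)) → VR.Cox r n k),
          x ∈ VR.Gsub r n k F d (i + 1) → F.diff i x ∈ VR.Gsub r n k F d i) ∧
    -- (ii): `G` is independent of the chosen minimal free resolution
    (∀ (F F' : VR.FreeComplex r n k)
        (ε : (Fin (F.rank 0) → VR.Cox r n k) →ₗ[VR.Cox r n k] N)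
        (ε' : (Fin (F'.rank 0) → VR.Cox r n k) →ₗ[VR.Cox r n k] N),
        VR.IsFreeResolution r n k F piece ε → VR.FreeComplex.IsMinimal r n k F →
        VR.IsFreeResolution r n k F' piece ε' → VR.FreeComplex.IsMinimal r n k F' →
        ∃ e : ∀ i : ℕ, VR.Gsub r n k F d i ≃ₗ[VR.Cox r n k] VR.Gsub r n k F' d i,
          (∀ (i : ℕ) (x : VR.Gsub r n k F d (i + 1))
              (hx' : F.diff i x.1 ∈ VR.Gsub r n k F d i),
              ((e i) ⟨F.diff i x.1, hx'⟩ : Fin (F'.rank i) → VR.Cox r n k)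
                = F'.diff i ((e (i + 1)) x).1) ∧
          (∀ (i : ℕ) (dd : Fin r → ℤ) (x : VR.Gsub r n k F d i),
              (x : Fin (F.rank i) → VR.Cox r n k) ∈ VR.fpiece r n k (F.twist i) dd →
              ((e i x : Fin (F'.rank i) → VR.Cox r n k) ∈ VR.fpiece r n k (F'.twist i) dd))) :=
  statement_9_general r n k N piece hgr d
end
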